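/- Let F be the bipartite graph with parts X = {a,b,c,d} and Y = {u,v,w,x,y} and edges au, ax, ay, bv, bw, bx, cu, cv, cy, du, dw, dx. Then f_o(F) = 4; that is, the maximum order of an induced subgraph of F in which every vertex has odd degree is exactly 4. -/

import Mathlib

open Classical in
/-- Degree of `v` within the subgraph of `G` induced by the finite vertex set `s`. -/
noncomputable def indDeg {V : Type*} (G : SimpleGraph V) (s : Finset V) (v : V) : ℕ :=
  (s.filter (fun w => G.Adj v w)).card

/-- `s` induces a subgraph of `G` in which every vertex has odd degree. -/
def IsOddSet {V : Type*} (G : SimpleGraph V) (s : Finset V) : Prop :=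
  ∀ v ∈ s, Odd (indDeg G s v)

/-- `f_o(G)`: maximum order of an induced subgraph with all degrees odd. -/
noncomputable def fo {V : Type*} (G : SimpleGraph V) : ℕ :=
  sSup {n | ∃ s : Finset V, IsOddSet G s ∧ s.card = n}

inductive FV | a | b | c | d | u | v | w | x | y
deriving DecidableEq

instance instFintypeFV : Fintype FV where
  elems := {FV.a, FV.b, FV.c, FV.d, FV.u, FV.v, FV.w, FV.x, FV.y}
  complete := by intro z; cases z <;> simp

open FV in
/-- The bipartite graph `F` with parts X = {a,b,c,d}, Y = {u,v,w,x,y} and edges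
au, ax, ay, bv, bw, bx, cu, cv, cy, du, dw, dx. -/
def Fgraph : SimpleGraph FV :=
  SimpleGraph.fromRel (fun p q => (p, q) ∈
    [(a,u),(a,x),(a,y),(b,v),(b,w),(b,x),(c,u),(c,v),(c,y),(d,u),(d,w),(d,x)])

instance : DecidableRel Fgraph.Adj := fun p q => by
  unfold Fgraph; exact inferInstanceAs (Decidable (p ≠ q ∧ _))

/-!
The lower bound is the witness `{a, b, u, v}`, which induces the matching `au, bv`.
The upper bound is a finite check over the `2 ^ 9` vertex subsets of `F`.
-/

-- `indDeg` filters with classical decidability; this exposes a computable form for `decide`.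
lemma indDeg_eq_card_filter {V : Type*} (G : SimpleGraph V) [DecidableRel G.Adj]
    (s : Finset V) (v : V) : indDeg G s v = (s.filter (G.Adj v)).card := by
  unfold indDeg
  congr 1
  exact Finset.filter_congr_decidable s _ _

lemma fo_eq_of_isOddSet_of_forall_card_le {V : Type*} (G : SimpleGraph V) {s : Finset V}
    (hs : IsOddSet G s) (hle : ∀ t : Finset V, IsOddSet G t → t.card ≤ s.card) :
    fo G = s.card :=
  IsGreatest.csSup_eq ⟨⟨s, hs, rfl⟩, by rintro _ ⟨t, ht, rfl⟩; exact hle t ht⟩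

open FV in
lemma isOddSet_Fgraph_abuv : IsOddSet Fgraph {a, b, u, v} := by
  simp only [IsOddSet, indDeg_eq_card_filter]
  decide

set_option maxRecDepth 10000 in
lemma card_le_four_of_isOddSet_Fgraph (s : Finset FV) (hs : IsOddSet Fgraph s) :
    s.card ≤ 4 := by
  revert s
  simp only [IsOddSet, indDeg_eq_card_filter]
  decide

/-- `f_o(F) = 4`. -/
theorem stmt_11 : fo Fgraph = 4 :=
  fo_eq_of_isOddSet_of_forall_card_le Fgraph isOddSet_Fgraph_abuv
    card_le_four_of_isOddSet_Fgraph
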